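/- arXiv:2310.07261 — 2 statements merged into one kernel-verified Lean document; each statement's English description precedes it below -/
import Mathlib

section
/- Let p ≥ 2 be an integer and let v = Σ_{ℓ=0}^{p} v_ℓ T_ℓ be a real polynomial of degree at most p written in the Chebyshev basis. Then Σ_{ℓ=2}^{p} |v_ℓ| ≤ (2/π) · ‖v'' / √(1−x²)‖_{L¹((−1,1))}. -/
open Polynomial Polynomial.Chebyshev Real MeasureTheory intervalIntegral

lemma cheb_cont (w : Polynomial ℝ) : Continuous fun θ : ℝ => w.eval (Real.cos θ) :=
  w.continuous.comp Real.continuous_cos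

lemma cheb_ibp (w : Polynomial ℝ) (m : ℝ) (hm : m ≠ 0) (hs : Real.sin (m * π) = 0) :
    ∫ θ in (0:ℝ)..π, w.eval (Real.cos θ) * Real.cos (m * θ)
      = (1/m) * ∫ θ in (0:ℝ)..π,
          (derivative w).eval (Real.cos θ) * (Real.sin θ * Real.sin (m * θ)) := by
  have hu : ∀ x ∈ Set.uIcc (0:ℝ) π, HasDerivAt (fun θ => w.eval (Real.cos θ))
      (-Real.sin x * (derivative w).eval (Real.cos x)) x := by
    intro x _
    have := (w.hasDerivAt (Real.cos x)).comp x (Real.hasDerivAt_cos x)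
    simpa [mul_comm, Function.comp_def] using this
  have hv : ∀ x ∈ Set.uIcc (0:ℝ) π, HasDerivAt (fun θ => Real.sin (m * θ) / m)
      (Real.cos (m * x)) x := by
    intro x _
    have h1 : HasDerivAt (fun θ : ℝ => Real.sin (m * θ)) (Real.cos (m * x) * m) x := by
      have := (Real.hasDerivAt_sin (m * x)).comp x ((hasDerivAt_id x).const_mul m)
      simpa [mul_comm, Function.comp_def] using this
    have := h1.div_const m
    simpa [mul_div_assoc, div_self hm] using this
  have hcont1 : Continuous fun x : ℝ => -Real.sin x * (derivative w).eval (Real.cos x) :=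
    (Real.continuous_sin.neg).mul (cheb_cont _)
  have hcont2 : Continuous fun x : ℝ => Real.cos (m * x) :=
    Real.continuous_cos.comp (continuous_const.mul continuous_id)
  have h := intervalIntegral.integral_mul_deriv_eq_deriv_mul hu hv
    (hcont1.intervalIntegrable 0 π) (hcont2.intervalIntegrable 0 π)
  simp only [hs, Real.sin_zero, mul_zero, zero_div, zero_sub, sub_zero] at h
  rw [h]
  rw [← intervalIntegral.integral_neg, ← intervalIntegral.integral_const_mul]
  apply intervalIntegral.integral_congr
  intro x _
  field_simp

lemma int_cos_mul (m : ℝ) (hm : m ≠ 0) :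
    ∫ θ in (0:ℝ)..π, Real.cos (m * θ) = Real.sin (m * π) / m := by
  rw [intervalIntegral.integral_comp_mul_left (fun x => Real.cos x) hm]
  simp [integral_cos, div_eq_inv_mul]

lemma cos_intble (m : ℝ) (a b : ℝ) :
    IntervalIntegrable (fun θ : ℝ => Real.cos (m * θ)) volume a b :=
  (Real.continuous_cos.comp (continuous_const.mul continuous_id)).intervalIntegrable a b

lemma orth_ne (a b : ℕ) (hab : a ≠ b) :
    ∫ θ in (0:ℝ)..π, Real.cos (a * θ) * Real.cos (b * θ) = 0 := by
  have key : ∀ θ : ℝ, Real.cos (a * θ) * Real.cos (b * θ)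
      = (Real.cos (((a:ℝ) - b) * θ) + Real.cos (((a:ℝ) + b) * θ)) / 2 := by
    intro θ
    rw [sub_mul, add_mul, Real.cos_sub, Real.cos_add]
    ring
  simp only [key]
  rw [intervalIntegral.integral_div,
    intervalIntegral.integral_add (cos_intble _ _ _) (cos_intble _ _ _)]
  have h1 : ((a:ℝ) - b) ≠ 0 := sub_ne_zero.2 (by exact_mod_cast hab)
  have hab' : a + b ≠ 0 := by omega
  have h3 : ((a:ℝ) + b) ≠ 0 := by exact_mod_cast (Nat.cast_ne_zero (R := ℝ)).2 hab'
  have h2 : Real.sin (((a:ℝ) - b) * π) = 0 := by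
    have := Real.sin_int_mul_pi ((a:ℤ) - b)
    push_cast at this ⊢; exact this
  have h4 : Real.sin (((a:ℝ) + b) * π) = 0 := by
    have := Real.sin_int_mul_pi ((a:ℤ) + b)
    push_cast at this ⊢; exact this
  rw [int_cos_mul _ h1, int_cos_mul _ h3, h2, h4]
  simp

lemma orth_self (a : ℕ) (ha : a ≠ 0) :
    ∫ θ in (0:ℝ)..π, Real.cos (a * θ) * Real.cos (a * θ) = π / 2 := by
  have key : ∀ θ : ℝ, Real.cos (a * θ) * Real.cos (a * θ)
      = (1 + Real.cos ((2 * a : ℝ) * θ)) / 2 := by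
    intro θ
    have h := Real.cos_sq (a * θ)
    have : Real.cos (↑a * θ) * Real.cos (↑a * θ) = Real.cos (↑a * θ) ^ 2 := (sq _).symm
    rw [this, h]
    ring_nf
  simp only [key]
  have h3 : ((2:ℝ) * a) ≠ 0 := by positivity
  have h4 : Real.sin (((2:ℝ) * a) * π) = 0 := by
    have := Real.sin_int_mul_pi ((2:ℤ) * a)
    push_cast at this ⊢; exact this
  rw [intervalIntegral.integral_div,
    intervalIntegral.integral_add (intervalIntegrable_const) (cos_intble _ _ _),
    int_cos_mul _ h3, h4]
  simp

lemma coeff_formula (p : ℕ) (v : Polynomial ℝ) (c : ℕ → ℝ)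
    (hv : v = ∑ ℓ ∈ Finset.range (p + 1), c ℓ • T ℝ ℓ) (k : ℕ) (hk1 : 1 ≤ k) (hkp : k ≤ p) :
    ∫ θ in (0:ℝ)..π, v.eval (Real.cos θ) * Real.cos (k * θ) = π / 2 * c k := by
  have hev : ∀ θ : ℝ, v.eval (Real.cos θ)
      = ∑ ℓ ∈ Finset.range (p + 1), c ℓ * Real.cos (ℓ * θ) := by
    intro θ
    rw [hv]
    simp only [eval_finset_sum, eval_smul, smul_eq_mul]
    refine Finset.sum_congr rfl fun ℓ _ => ?_
    rw [T_real_cos]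
    push_cast
    ring_nf
  simp only [hev, Finset.sum_mul]
  rw [intervalIntegral.integral_finset_sum]
  · rw [Finset.sum_eq_single k]
    · simp only [mul_assoc]
      rw [intervalIntegral.integral_const_mul, orth_self k (by omega)]
      ring
    · intro ℓ _ hℓ
      simp only [mul_assoc]
      rw [intervalIntegral.integral_const_mul, orth_ne ℓ k hℓ, mul_zero]
    · intro h
      exact absurd (Finset.mem_range.2 (by omega)) h
  · intro ℓ _
    apply Continuous.intervalIntegrable
    exact (continuous_const.mul ((Real.continuous_cos.comp (continuous_const.mul continuous_id)))).mul
      (Real.continuous_cos.comp (continuous_const.mul continuous_id))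

lemma cos_image_Ioo : Real.cos '' Set.Ioo 0 π = Set.Ioo (-1) 1 := by
  ext y
  constructor
  · rintro ⟨θ, ⟨h0, hπ⟩, rfl⟩
    constructor
    · have := Real.strictAntiOn_cos (Set.mem_Icc.2 ⟨le_of_lt h0, le_of_lt hπ⟩)
        (Set.mem_Icc.2 ⟨Real.pi_pos.le, le_refl π⟩) hπ
      simpa [Real.cos_pi] using this
    · have := Real.strictAntiOn_cos (Set.mem_Icc.2 ⟨le_refl 0, Real.pi_pos.le⟩)
        (Set.mem_Icc.2 ⟨le_of_lt h0, le_of_lt hπ⟩) h0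
      simpa [Real.cos_zero] using this
  · rintro ⟨h1, h2⟩
    refine ⟨Real.arccos y, ⟨Real.arccos_pos.2 h2, ?_⟩, Real.cos_arccos h1.le h2.le⟩
    have h3 : 0 < Real.arccos (-y) := Real.arccos_pos.2 (by linarith)
    linarith [Real.arccos_neg y]

lemma cos_cov (f : ℝ → ℝ) :
    ∫ x in (-1:ℝ)..1, f x / Real.sqrt (1 - x ^ 2) = ∫ θ in (0:ℝ)..π, f (Real.cos θ) := by
  rw [intervalIntegral.integral_of_le (by norm_num : (-1:ℝ) ≤ 1),
    intervalIntegral.integral_of_le Real.pi_pos.le,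
    MeasureTheory.integral_Ioc_eq_integral_Ioo, MeasureTheory.integral_Ioc_eq_integral_Ioo,
    ← cos_image_Ioo,
    integral_image_eq_integral_abs_deriv_smul measurableSet_Ioo
      (fun x _ => (Real.hasDerivAt_cos x).hasDerivWithinAt)
      (Real.strictAntiOn_cos.injOn.mono Set.Ioo_subset_Icc_self)]
  refine MeasureTheory.setIntegral_congr_fun measurableSet_Ioo fun θ hθ => ?_
  obtain ⟨h0, hπ⟩ := hθ
  have hsin : 0 < Real.sin θ := Real.sin_pos_of_pos_of_lt_pi h0 hπ
  have hsq : Real.sqrt (1 - Real.cos θ ^ 2) = Real.sin θ := by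
    rw [show (1 : ℝ) - Real.cos θ ^ 2 = Real.sin θ ^ 2 by
      have := Real.sin_sq_add_cos_sq θ; linarith]
    exact Real.sqrt_sq hsin.le
  simp only [smul_eq_mul, abs_neg, abs_of_pos hsin, hsq]
  field_simp

lemma sinsin_bound (w : Polynomial ℝ) (m : ℝ) :
    |∫ θ in (0:ℝ)..π, w.eval (Real.cos θ) * (Real.sin θ * Real.sin (m * θ))|
      ≤ ∫ θ in (0:ℝ)..π, |w.eval (Real.cos θ)| := by
  have h1 := intervalIntegral.norm_integral_le_integral_norm (μ := volume)
    (f := fun θ => w.eval (Real.cos θ) * (Real.sin θ * Real.sin (m * θ))) Real.pi_pos.le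
  refine h1.trans ?_
  apply intervalIntegral.integral_mono_on Real.pi_pos.le
  · exact (((cheb_cont w).mul (Real.continuous_sin.mul
      (Real.continuous_sin.comp (continuous_const.mul continuous_id)))).norm).intervalIntegrable 0 π
  · exact ((cheb_cont w).abs).intervalIntegrable 0 π
  · intro x _
    simp only [Real.norm_eq_abs, abs_mul]
    have hs1 : |Real.sin x| ≤ 1 := Real.abs_sin_le_one x
    have hs2 : |Real.sin (m * x)| ≤ 1 := Real.abs_sin_le_one (m * x)
    have h0 : (0:ℝ) ≤ |w.eval (Real.cos x)| := abs_nonneg _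
    have hst : |Real.sin x| * |Real.sin (m * x)| ≤ 1 :=
      mul_le_one₀ hs1 (abs_nonneg _) hs2
    exact mul_le_of_le_one_right h0 hst

lemma sin_nat_sub_pi (a : ℕ) : Real.sin (((a:ℝ) - 1) * π) = 0 := by
  have := Real.sin_int_mul_pi ((a:ℤ) - 1)
  push_cast at this ⊢; exact this

lemma sin_nat_add_pi (a : ℕ) : Real.sin (((a:ℝ) + 1) * π) = 0 := by
  have := Real.sin_int_mul_pi ((a:ℤ) + 1)
  push_cast at this ⊢; exact this

lemma key_bound (v : Polynomial ℝ) (ℓ : ℕ) (hℓ : 2 ≤ ℓ) :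
    |∫ θ in (0:ℝ)..π, v.eval (Real.cos θ) * Real.cos (ℓ * θ)|
      ≤ (1/((ℓ:ℝ) - 1) - 1/ℓ) *
        ∫ θ in (0:ℝ)..π, |(derivative (derivative v)).eval (Real.cos θ)| := by
  set J := ∫ θ in (0:ℝ)..π, |(derivative (derivative v)).eval (Real.cos θ)| with hJ
  have hJ0 : 0 ≤ J := intervalIntegral.integral_nonneg Real.pi_pos.le fun x _ => abs_nonneg _
  have hℓR : (2:ℝ) ≤ (ℓ:ℝ) := by exact_mod_cast hℓ
  have hℓpos : (0:ℝ) < (ℓ:ℝ) := by linarith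
  have hm1pos : (0:ℝ) < (ℓ:ℝ) - 1 := by linarith
  have hp1pos : (0:ℝ) < (ℓ:ℝ) + 1 := by linarith
  have hℓ0 : (ℓ:ℝ) ≠ 0 := ne_of_gt hℓpos
  have hm1 : ((ℓ:ℝ) - 1) ≠ 0 := ne_of_gt hm1pos
  have hp1 : ((ℓ:ℝ) + 1) ≠ 0 := ne_of_gt hp1pos
  have hsℓ : Real.sin ((ℓ:ℝ) * π) = 0 := by
    have := Real.sin_int_mul_pi (ℓ:ℤ); push_cast at this ⊢; exact this
  have h1 := cheb_ibp v (ℓ:ℝ) hℓ0 hsℓ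
  have hsplit : ∀ θ : ℝ, (derivative v).eval (Real.cos θ) * (Real.sin θ * Real.sin ((ℓ:ℝ) * θ))
      = ((derivative v).eval (Real.cos θ) * Real.cos ((((ℓ:ℝ) - 1)) * θ)
        - (derivative v).eval (Real.cos θ) * Real.cos ((((ℓ:ℝ) + 1)) * θ)) / 2 := by
    intro θ
    have : Real.sin θ * Real.sin ((ℓ:ℝ) * θ)
        = (Real.cos (((ℓ:ℝ) - 1) * θ) - Real.cos (((ℓ:ℝ) + 1) * θ)) / 2 := by
      rw [sub_mul, add_mul, one_mul, Real.cos_sub, Real.cos_add]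
      ring
    rw [this]; ring
  set A := ∫ θ in (0:ℝ)..π, (derivative v).eval (Real.cos θ) * Real.cos ((((ℓ:ℝ) - 1)) * θ) with hA
  set B := ∫ θ in (0:ℝ)..π, (derivative v).eval (Real.cos θ) * Real.cos ((((ℓ:ℝ) + 1)) * θ) with hB
  have h2 := cheb_ibp (derivative v) ((ℓ:ℝ) - 1) hm1 (sin_nat_sub_pi ℓ)
  have h3 := cheb_ibp (derivative v) ((ℓ:ℝ) + 1) hp1 (sin_nat_add_pi ℓ)
  have hb2 : |A| ≤ (1/((ℓ:ℝ) - 1)) * J := by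
    rw [hA, h2, abs_mul, abs_of_pos (div_pos one_pos hm1pos)]
    exact mul_le_mul_of_nonneg_left (sinsin_bound _ _) (le_of_lt (div_pos one_pos hm1pos))
  have hb3 : |B| ≤ (1/((ℓ:ℝ) + 1)) * J := by
    rw [hB, h3, abs_mul, abs_of_pos (div_pos one_pos hp1pos)]
    exact mul_le_mul_of_nonneg_left (sinsin_bound _ _) (le_of_lt (div_pos one_pos hp1pos))
  rw [h1]
  simp only [hsplit]
  have hi : ∀ m : ℝ, IntervalIntegrable (fun θ : ℝ =>
      (derivative v).eval (Real.cos θ) * Real.cos (m * θ)) volume 0 π := fun m =>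
    ((cheb_cont _).mul (Real.continuous_cos.comp (continuous_const.mul continuous_id))).intervalIntegrable 0 π
  rw [intervalIntegral.integral_div, intervalIntegral.integral_sub (hi _) (hi _), ← hA, ← hB]
  rw [abs_mul, abs_of_pos (div_pos one_pos hℓpos), abs_div, abs_two]
  have habs : |A - B| ≤ (1/((ℓ:ℝ) - 1)) * J + (1/((ℓ:ℝ) + 1)) * J :=
    (abs_sub _ _).trans (add_le_add hb2 hb3)
  have hfrac : 1/(ℓ:ℝ) * ((1/((ℓ:ℝ) - 1) + 1/((ℓ:ℝ) + 1)) / 2) ≤ 1/((ℓ:ℝ) - 1) - 1/(ℓ:ℝ) := by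
    have e1 : 1/(ℓ:ℝ) * ((1/((ℓ:ℝ) - 1) + 1/((ℓ:ℝ) + 1)) / 2) = 1/(((ℓ:ℝ) - 1)*((ℓ:ℝ) + 1)) := by
      field_simp
      ring
    have e2 : 1/((ℓ:ℝ) - 1) - 1/(ℓ:ℝ) = 1/(((ℓ:ℝ) - 1)*(ℓ:ℝ)) := by
      field_simp
      ring
    rw [e1, e2]
    apply one_div_le_one_div_of_le (by nlinarith) (by nlinarith)
  calc 1/(ℓ:ℝ) * (|A - B| / 2)
      ≤ 1/(ℓ:ℝ) * (((1/((ℓ:ℝ) - 1)) * J + (1/((ℓ:ℝ) + 1)) * J) / 2) := by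
        apply mul_le_mul_of_nonneg_left _ (le_of_lt (div_pos one_pos hℓpos))
        linarith
    _ = (1/(ℓ:ℝ) * ((1/((ℓ:ℝ) - 1) + 1/((ℓ:ℝ) + 1)) / 2)) * J := by ring
    _ ≤ (1/((ℓ:ℝ) - 1) - 1/ℓ) * J := mul_le_mul_of_nonneg_right hfrac hJ0

lemma tele (p : ℕ) (hp : 2 ≤ p) :
    ∑ ℓ ∈ Finset.Icc 2 p, (1/((ℓ:ℝ) - 1) - 1/ℓ) = 1 - 1/p := by
  induction p with
  | zero => omega
  | succ n ih =>
    rcases Nat.lt_or_ge n 2 with h | h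
    · have hn : n = 1 := by omega
      subst hn
      norm_num [Finset.Icc_self]
    · rw [Finset.sum_Icc_succ_top (by omega : 2 ≤ n + 1), ih h]
      have hn0 : ((n:ℝ)) ≠ 0 := by
        have : (0:ℝ) < n := by exact_mod_cast Nat.lt_of_lt_of_le Nat.zero_lt_two h
        exact ne_of_gt this
      have hn1 : ((n:ℝ)) + 1 ≠ 0 := by positivity
      push_cast
      have e : ((n:ℝ) + 1 - 1) = n := by ring
      rw [e]
      field_simp
      ring

theorem cheb_coeff_sum_bound (p : ℕ) (hp : 2 ≤ p) (v : Polynomial ℝ)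
    (c : ℕ → ℝ) (hv : v = ∑ ℓ ∈ Finset.range (p + 1), c ℓ • T ℝ ℓ) :
    ∑ ℓ ∈ Finset.Icc 2 p, |c ℓ| ≤
      (2 / Real.pi) *
        ∫ x in (-1 : ℝ)..1,
          |(Polynomial.derivative (Polynomial.derivative v)).eval x| / Real.sqrt (1 - x ^ 2) := by
  have hπ := Real.pi_pos
  set J := ∫ θ in (0:ℝ)..π, |(derivative (derivative v)).eval (Real.cos θ)| with hJdef
  have hJ0 : 0 ≤ J := intervalIntegral.integral_nonneg hπ.le fun x _ => abs_nonneg _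
  have hRHS : (∫ x in (-1:ℝ)..1,
      |(derivative (derivative v)).eval x| / Real.sqrt (1 - x ^ 2)) = J :=
    cos_cov fun x => |(derivative (derivative v)).eval x|
  rw [hRHS]
  have hstep : ∀ ℓ ∈ Finset.Icc 2 p, |c ℓ| ≤ (2/π) * ((1/((ℓ:ℝ) - 1) - 1/ℓ) * J) := by
    intro ℓ hℓ
    obtain ⟨h2, hp'⟩ := Finset.mem_Icc.1 hℓ
    have hcf := coeff_formula p v c hv ℓ (by omega) hp'
    have hkb := key_bound v ℓ h2
    have hceq : |c ℓ| = (2/π) * |∫ θ in (0:ℝ)..π, v.eval (Real.cos θ) * Real.cos (ℓ * θ)| := by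
      rw [hcf, abs_mul, abs_of_pos (by positivity : (0:ℝ) < π/2)]
      field_simp
    rw [hceq]
    exact mul_le_mul_of_nonneg_left hkb (by positivity)
  calc ∑ ℓ ∈ Finset.Icc 2 p, |c ℓ|
      ≤ ∑ ℓ ∈ Finset.Icc 2 p, (2/π) * ((1/((ℓ:ℝ) - 1) - 1/ℓ) * J) := Finset.sum_le_sum hstep
    _ = (2/π) * ((∑ ℓ ∈ Finset.Icc 2 p, (1/((ℓ:ℝ) - 1) - 1/ℓ)) * J) := by
        rw [← Finset.mul_sum, Finset.sum_mul]
    _ ≤ (2/π) * (1 * J) := by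
        apply mul_le_mul_of_nonneg_left _ (by positivity)
        apply mul_le_mul_of_nonneg_right _ hJ0
        rw [tele p hp]
        have : (0:ℝ) ≤ 1/p := by positivity
        linarith
    _ = (2/π) * J := by ring
end

section
/- Let p ≥ 1 be an integer and v a polynomial of degree at most p with Chebyshev expansion v = Σ_{ℓ=0}^{p} v_ℓ T_ℓ. Then Σ_{ℓ=2}^{p} |v_ℓ| ≤ p⁴ · min{ ‖w‖_{L^∞((−1,1))} : w polynomial of degree ≤ p with w'' = v'' }. -/
/-!
Since `w'' = v''`, the polynomial `w - v` is affine, i.e. a combination of `T₀` and `T₁`. By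
orthogonality of the Chebyshev polynomials for the weight `(1 - x²)^(-1/2)`, whose total mass is
`π`, each coefficient `c ℓ` with `2 ≤ ℓ ≤ p` is `(2/π) ∫ w Tℓ`, so `|c ℓ| ≤ 2 ‖w‖_∞`.
Summing over the `p - 1` such indices gives the bound `2 (p - 1) ‖w‖_∞ ≤ p⁴ ‖w‖_∞`.
-/

open Polynomial Polynomial.Chebyshev Real MeasureTheory

lemma abs_le_iSup_Ioo_of_mem_Icc {f : ℝ → ℝ} (hf : Continuous f) {a b x : ℝ} (hab : a < b)
    (hx : x ∈ Set.Icc a b) : |f x| ≤ ⨆ y : Set.Ioo a b, |f y| := by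
  obtain ⟨C, hC⟩ :=
    isCompact_Icc.exists_bound_of_continuousOn (hf.abs.continuousOn (s := Set.Icc a b))
  have hbdd : BddAbove (Set.range fun y : Set.Ioo a b ↦ |f y|) := by
    refine ⟨C, ?_⟩
    rintro _ ⟨y, rfl⟩
    simpa using hC y (Set.Ioo_subset_Icc_self y.2)
  have hsub : Set.Ioo a b ⊆ {y | |f y| ≤ ⨆ y : Set.Ioo a b, |f y|} :=
    fun y hy ↦ le_ciSup hbdd ⟨y, hy⟩
  rw [← closure_Ioo hab.ne] at hx
  exact closure_minimal hsub (isClosed_le hf.abs continuous_const) hx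

lemma Polynomial.natDegree_le_one_of_derivative_derivative_eq_zero {R : Type*} [Semiring R]
    [IsAddTorsionFree R] {q : R[X]} (h : derivative (derivative q) = 0) : q.natDegree ≤ 1 := by
  simp only [derivative_eq_zero, natDegree_derivative] at h
  omega

namespace Polynomial.Chebyshev

lemma eq_sum_smul_T_of_natDegree_le_one {R : Type*} [CommRing R] {q : R[X]}
    (h : q.natDegree ≤ 1) : q = ∑ ℓ ∈ Finset.range 2, q.coeff ℓ • T R ℓ := by
  conv_lhs => rw [eq_X_add_C_of_natDegree_le_one h]
  simp [Finset.sum_range_succ, smul_eq_C_mul, add_comm]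

lemma integral_eval_sum_smul_T_mul_eval_T_measureT (s : Finset ℕ) (c : ℕ → ℝ) {j : ℕ}
    (hj : j ≠ 0) :
    ∫ x, (∑ ℓ ∈ s, c ℓ • T ℝ ℓ).eval x * (T ℝ j).eval x ∂measureT =
      if j ∈ s then c j * (π / 2) else 0 := by
  have hterm (ℓ : ℕ) : ∫ x, c ℓ * ((T ℝ ℓ).eval x * (T ℝ j).eval x) ∂measureT =
      if ℓ = j then c j * (π / 2) else 0 := by
    rw [integral_const_mul]
    split_ifs with h
    · rw [h, integral_T_real_mul_self_measureT_of_ne_zero hj]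
    · rw [integral_eval_T_real_mul_eval_T_real_measureT_of_ne h, mul_zero]
  simp only [eval_finsetSum, eval_smul, smul_eq_mul, Finset.sum_mul, mul_assoc]
  rw [integral_finsetSum _ fun ℓ _ ↦ integrable_measureT (by fun_prop)]
  simp only [hterm, Finset.sum_ite_eq']

lemma integral_eval_mul_eval_T_measureT_of_derivative_derivative_eq {n j : ℕ} (c : ℕ → ℝ)
    {w : ℝ[X]} (hw : derivative (derivative w) =
      derivative (derivative (∑ ℓ ∈ Finset.range n, c ℓ • T ℝ ℓ)))
    (hj : 2 ≤ j) (hjn : j < n) :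
    ∫ x, w.eval x * (T ℝ j).eval x ∂measureT = c j * (π / 2) := by
  set v := ∑ ℓ ∈ Finset.range n, c ℓ • T ℝ ℓ
  have hwv : w = v + ∑ ℓ ∈ Finset.range 2, (w - v).coeff ℓ • T ℝ ℓ := by
    rw [← eq_sum_smul_T_of_natDegree_le_one (natDegree_le_one_of_derivative_derivative_eq_zero
      (by simp [hw])), add_sub_cancel]
  rw [hwv]
  simp only [Polynomial.eval_add, add_mul]
  rw [integral_add (integrable_measureT (by fun_prop)) (integrable_measureT (by fun_prop)),
    integral_eval_sum_smul_T_mul_eval_T_measureT _ _ (by omega),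
    integral_eval_sum_smul_T_mul_eval_T_measureT _ _ (by omega)]
  simp [hjn, show ¬j < 2 by omega]

lemma abs_integral_mul_eval_T_measureT_le {f : ℝ → ℝ} {M : ℝ}
    (hf : ∀ x ∈ Set.Icc (-1) 1, |f x| ≤ M) (n : ℕ) :
    |∫ x, f x * (T ℝ n).eval x ∂measureT| ≤ π * M := by
  rw [integral_measureT_eq_integral_cos]
  have hbound (θ : ℝ) : ‖f (cos θ) * (T ℝ n).eval (cos θ)‖ ≤ M := by
    have hfθ := hf _ ⟨neg_one_le_cos θ, cos_le_one θ⟩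
    rw [Real.norm_eq_abs, abs_mul, T_real_cos]
    calc |f (cos θ)| * |cos (n * θ)| ≤ M * 1 :=
          mul_le_mul hfθ (abs_cos_le_one _) (abs_nonneg _) ((abs_nonneg _).trans hfθ)
      _ = M := mul_one M
  have := intervalIntegral.norm_integral_le_of_norm_le_const (a := 0) (b := π)
    fun θ _ ↦ hbound θ
  rwa [sub_zero, abs_of_pos pi_pos, mul_comm] at this

end Polynomial.Chebyshev

theorem cheb_coeff_sum_le_min_sup_general (p : ℕ) (v : Polynomial ℝ)
    (c : ℕ → ℝ) (hv : v = ∑ ℓ ∈ Finset.range (p + 1), c ℓ • T ℝ ℓ) :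
    ∀ w : Polynomial ℝ, w.natDegree ≤ p →
      Polynomial.derivative (Polynomial.derivative w) =
        Polynomial.derivative (Polynomial.derivative v) →
      ∑ ℓ ∈ Finset.Icc 2 p, |c ℓ| ≤
        (p : ℝ) ^ 4 * ⨆ x : Set.Ioo (-1 : ℝ) 1, |w.eval (x : ℝ)| := by
  intro w _ hw
  set M := ⨆ x : Set.Ioo (-1 : ℝ) 1, |w.eval (x : ℝ)|
  have hM : 0 ≤ M := Real.iSup_nonneg fun _ ↦ abs_nonneg _
  have hwM (x : ℝ) (hx : x ∈ Set.Icc (-1) 1) : |w.eval x| ≤ M :=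
    abs_le_iSup_Ioo_of_mem_Icc w.continuous (by norm_num) hx
  have hcoeff (j : ℕ) (hj : j ∈ Finset.Icc 2 p) : |c j| ≤ 2 * M := by
    rw [Finset.mem_Icc] at hj
    have hI := abs_integral_mul_eval_T_measureT_le hwM j
    rw [integral_eval_mul_eval_T_measureT_of_derivative_derivative_eq c (hv ▸ hw) hj.1
      (by omega), abs_mul, abs_of_pos (half_pos pi_pos)] at hI
    nlinarith [pi_pos]
  have hcard : ((Finset.Icc 2 p).card : ℝ) * 2 ≤ (p : ℝ) ^ 4 := by
    rw [Nat.card_Icc]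
    rcases p with _ | _ | p
    · simp
    · simp
    · have hp : (0 : ℝ) ≤ p := p.cast_nonneg
      push_cast
      nlinarith [pow_nonneg hp 3, pow_nonneg hp 4]
  calc ∑ ℓ ∈ Finset.Icc 2 p, |c ℓ| ≤ (Finset.Icc 2 p).card • (2 * M) :=
        Finset.sum_le_card_nsmul _ _ _ hcoeff
    _ ≤ (p : ℝ) ^ 4 * M := by
      rw [nsmul_eq_mul, ← mul_assoc]
      gcongr

theorem cheb_coeff_sum_le_min_sup (p : ℕ) (hp : 1 ≤ p) (v : Polynomial ℝ)
    (c : ℕ → ℝ) (hv : v = ∑ ℓ ∈ Finset.range (p + 1), c ℓ • T ℝ ℓ) :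
    ∀ w : Polynomial ℝ, w.natDegree ≤ p →
      Polynomial.derivative (Polynomial.derivative w) =
        Polynomial.derivative (Polynomial.derivative v) →
      ∑ ℓ ∈ Finset.Icc 2 p, |c ℓ| ≤
        (p : ℝ) ^ 4 * ⨆ x : Set.Ioo (-1 : ℝ) 1, |w.eval (x : ℝ)| :=
  cheb_coeff_sum_le_min_sup_general p v c hv
end
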